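/- arXiv:1309.4734 — 5 statements merged into one kernel-verified Lean document; each statement's English description precedes it below -/
import Mathlib

section
/- Let R > 0, let f : [0,R) → ℝ be continuously differentiable with f(0) = 0, f'(0) = −1, and f' strictly increasing on [0,R), let n_f(t) := t − f(t)/f'(t) on (0,ν) with ν := sup{t ∈ [0,R) : f'(t) < 0}, and let K ≥ 1 and 0 ≤ ϑ < 1/K. Then there exists δ ∈ (0,ν) such that (1+ϑ)·|n_f(t)|/t + ϑ < 1/K for all t ∈ (0,δ); in particular ρ := sup{δ ∈ (0,ν) : (1+ϑ)·|n_f(t)|/t + ϑ < 1/K for all t ∈ (0,δ)} is positive. -/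
/-! Near a simple zero at `0` the Newton step contracts superlinearly: `f t / t → f'(0)` and
`f' t → f'(0) ≠ 0`, so `n_f(t) / t = 1 - (f t / t) / f' t → 0`. Hence
`(1 + ϑ) |n_f(t)| / t + ϑ → ϑ < 1 / K` as `t → 0⁺`. Since `f'(0) < 0` and `f'` is continuous
at `0`, also `ν > 0`, so the admissible radii `δ` fill a right neighbourhood of `0`. -/

open Filter Topology Set

theorem tendsto_newton_div_self_nhdsGT {f f' : ℝ → ℝ} {d : ℝ}
    (hf : HasDerivWithinAt f d (Ioi 0) 0) (hf0 : f 0 = 0)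
    (hf' : Tendsto f' (𝓝[>] 0) (𝓝 d)) (hd : d ≠ 0) :
    Tendsto (fun t => (t - f t / f' t) / t) (𝓝[>] 0) (𝓝 0) := by
  have hslope : Tendsto (fun t => f t / t) (𝓝[>] 0) (𝓝 d) := by
    have := hasDerivWithinAt_iff_tendsto_slope.mp hf
    rw [sdiff_singleton_eq_self self_notMem_Ioi] at this
    refine this.congr fun t => ?_
    simp only [slope_def_field, hf0, sub_zero]
  have hlim : Tendsto (fun t => 1 - f t / t / f' t) (𝓝[>] 0) (𝓝 0) := by
    simpa [hd] using (hslope.div hf' hd).const_sub 1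
  refine hlim.congr' (eventually_nhdsWithin_of_forall fun t (ht : 0 < t) => ?_)
  field_simp

theorem Filter.Eventually.forall_Ioo_nhdsGT {P : ℝ → Prop} {a : ℝ}
    (h : ∀ᶠ t in 𝓝[>] a, P t) : ∀ᶠ δ in 𝓝[>] a, ∀ t ∈ Ioo a δ, P t := by
  obtain ⟨u, hau, hu⟩ := mem_nhdsGT_iff_exists_Ioo_subset.mp h
  filter_upwards [Ioo_mem_nhdsGT hau] with δ hδ t ht
  exact hu ⟨ht.1, ht.2.trans hδ.2⟩

theorem Filter.Eventually.exists_pos {P : ℝ → Prop} (h : ∀ᶠ t in 𝓝[>] (0 : ℝ), P t) :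
    ∃ t, 0 < t ∧ P t :=
  (h.and self_mem_nhdsWithin).exists.imp fun _ ht => ⟨ht.2, ht.1⟩

theorem sSup_pos_of_eventually_mem {S : Set ℝ} (hS : BddAbove S)
    (h : ∀ᶠ t in 𝓝[>] (0 : ℝ), t ∈ S) : 0 < sSup S :=
  let ⟨_, ht, htS⟩ := h.exists_pos
  ht.trans_le (le_csSup hS htS)

theorem statement_3_general
    (R : ℝ) (hR : 0 < R) (f f' : ℝ → ℝ)
    (hderiv : ∀ t ∈ Set.Ico (0:ℝ) R, HasDerivWithinAt f (f' t) (Set.Ico (0:ℝ) R) t)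
    (hcont : ContinuousOn f' (Set.Ico (0:ℝ) R))
    (h0 : f 0 = 0) (h0' : f' 0 = -1)
    (ν : ℝ) (hν : ν = sSup {t ∈ Set.Ico (0:ℝ) R | f' t < 0})
    (K ϑ : ℝ) (hϑ : ϑ < 1 / K) :
    (∃ δ ∈ Set.Ioo (0:ℝ) ν, ∀ t ∈ Set.Ioo (0:ℝ) δ,
        (1 + ϑ) * |t - f t / f' t| / t + ϑ < 1 / K) ∧
    0 < sSup {δ ∈ Set.Ioo (0:ℝ) ν | ∀ t ∈ Set.Ioo (0:ℝ) δ,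
        (1 + ϑ) * |t - f t / f' t| / t + ϑ < 1 / K} := by
  have h0mem : (0 : ℝ) ∈ Ico 0 R := ⟨le_rfl, hR⟩
  have hf' : Tendsto f' (𝓝[>] 0) (𝓝 (-1)) := by
    rw [← nhdsWithin_Ioo_eq_nhdsGT hR, ← h0']
    exact (hcont 0 h0mem).mono Ioo_subset_Ico_self
  have hf : HasDerivWithinAt f (-1) (Ioi 0) 0 :=
    h0' ▸ ((hderiv 0 h0mem).mono Ioo_subset_Ico_self).Ioi_of_Ioo hR
  have hν0 : 0 < ν := by
    refine hν ▸ sSup_pos_of_eventually_mem ⟨R, fun _ ht => ht.1.2.le⟩ ?_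
    filter_upwards [Ioo_mem_nhdsGT hR, hf'.eventually_lt_const (by norm_num : (-1 : ℝ) < 0)]
      with t htR ht using ⟨Ioo_subset_Ico_self htR, ht⟩
  have hbound : ∀ᶠ t in 𝓝[>] 0, (1 + ϑ) * |t - f t / f' t| / t + ϑ < 1 / K := by
    have hlim := ((tendsto_newton_div_self_nhdsGT hf h0 hf' (by norm_num)).abs.const_mul
      (1 + ϑ)).add_const ϑ
    simp only [abs_zero, mul_zero, zero_add] at hlim
    filter_upwards [hlim.eventually_lt_const hϑ, self_mem_nhdsWithin] with t ht (htpos : 0 < t)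
    rwa [mul_div_assoc, ← abs_of_pos htpos, ← abs_div, abs_of_pos htpos]
  have hradii : ∀ᶠ δ in 𝓝[>] 0, δ ∈ Ioo 0 ν ∧ ∀ t ∈ Ioo 0 δ,
      (1 + ϑ) * |t - f t / f' t| / t + ϑ < 1 / K :=
    Filter.Eventually.and (Ioo_mem_nhdsGT hν0) hbound.forall_Ioo_nhdsGT
  obtain ⟨δ, -, hδ⟩ := hradii.exists_pos
  exact ⟨⟨δ, hδ⟩, sSup_pos_of_eventually_mem ⟨ν, fun _ hδ => hδ.1.2.le⟩ hradii⟩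

/-- For a majorant function `f`, constants `K ≥ 1`, `0 ≤ ϑ < 1/K`,
there exists `δ ∈ (0,ν)` such that `(1+ϑ)·|n_f t|/t + ϑ < 1/K` for all `t ∈ (0,δ)`;
in particular `ρ := sup {δ ∈ (0,ν) : ∀ t ∈ (0,δ), (1+ϑ)·|n_f t|/t + ϑ < 1/K}`
is positive. -/
theorem statement_3
    (R : ℝ) (hR : 0 < R) (f f' : ℝ → ℝ)
    (hderiv : ∀ t ∈ Set.Ico (0:ℝ) R, HasDerivWithinAt f (f' t) (Set.Ico (0:ℝ) R) t)
    (hcont : ContinuousOn f' (Set.Ico (0:ℝ) R))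
    (h0 : f 0 = 0) (h0' : f' 0 = -1)
    (hmono : StrictMonoOn f' (Set.Ico (0:ℝ) R))
    (ν : ℝ) (hν : ν = sSup {t ∈ Set.Ico (0:ℝ) R | f' t < 0})
    (K ϑ : ℝ) (hK : 1 ≤ K) (hϑ0 : 0 ≤ ϑ) (hϑ : ϑ < 1 / K) :
    (∃ δ ∈ Set.Ioo (0:ℝ) ν, ∀ t ∈ Set.Ioo (0:ℝ) δ,
        (1 + ϑ) * |t - f t / f' t| / t + ϑ < 1 / K) ∧
    0 < sSup {δ ∈ Set.Ioo (0:ℝ) ν | ∀ t ∈ Set.Ioo (0:ℝ) δ,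
        (1 + ϑ) * |t - f t / f' t| / t + ϑ < 1 / K} :=
  statement_3_general R hR f f' hderiv hcont h0 h0' ν hν K ϑ hϑ
end

section
/- Let R > 0 and let f : [0,R) → ℝ be continuously differentiable with f(0) = 0, f'(0) = −1, f' strictly increasing on [0,R), and f' convex on [0,R). Then for each fixed τ ∈ (0,1), the map t ↦ (f'(t) − f'(τ·t))/t is positive and increasing (nondecreasing) on (0,ν), where ν := sup{t ∈ [0,R) : f'(t) < 0}. -/
/-!
Writing `t - τ t = (1 - τ) t`, the quotient `(f' t - f' (τ t)) / t` is `(1 - τ)` times the slope of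
the secant of `f'` over `[τ t, t]`. Both endpoints of this chord move to the right as `t` grows, so
convexity of `f'` makes the slope nondecreasing, while strict monotonicity of `f'` makes it positive.
Finally every `t ∈ (0, ν)` lies below some point of `[0, R)`, so all these chords live in `[0, R)`.
-/

open Set

lemma ConvexOn.slope_le_slope {s : Set ℝ} {g : ℝ → ℝ} (hg : ConvexOn ℝ s g) {a b c d : ℝ}
    (ha : a ∈ s) (hb : b ∈ s) (hc : c ∈ s) (hd : d ∈ s)
    (hab : a < b) (hcd : c < d) (hac : a ≤ c) (hbd : b ≤ d) :
    slope g a b ≤ slope g c d := by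
  have had : a < d := hab.trans_le hbd
  calc slope g a b ≤ slope g a d :=
        hg.slope_mono ha ⟨hb, hab.ne'⟩ ⟨hd, had.ne'⟩ hbd
    _ = slope g d a := slope_comm _ _ _
    _ ≤ slope g d c := hg.slope_mono hd ⟨ha, had.ne⟩ ⟨hc, hcd.ne⟩ hac
    _ = slope g c d := slope_comm _ _ _

lemma sub_comp_mul_div_eq_slope (g : ℝ → ℝ) {τ t : ℝ} (hτ : τ ≠ 1) (ht : t ≠ 0) :
    (g t - g (τ * t)) / t = (1 - τ) * slope g (τ * t) t := by
  have h1τ : 1 - τ ≠ 0 := sub_ne_zero.mpr hτ.symm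
  rw [slope_def_field, show t - τ * t = (1 - τ) * t by ring]
  field_simp

lemma mul_mem_Ioo_of_mem_Ioo {τ t R : ℝ} (hτ : τ ∈ Ioo (0 : ℝ) 1) (ht : t ∈ Ioo 0 R) :
    τ * t ∈ Ioo 0 R ∧ τ * t < t :=
  have hlt : τ * t < t := mul_lt_of_lt_one_left ht.1 hτ.2
  ⟨⟨mul_pos hτ.1 ht.1, hlt.trans ht.2⟩, hlt⟩

lemma ConvexOn.monotoneOn_sub_comp_mul_div {R : ℝ} {g : ℝ → ℝ} (hg : ConvexOn ℝ (Ioo 0 R) g)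
    {τ : ℝ} (hτ : τ ∈ Ioo (0 : ℝ) 1) :
    MonotoneOn (fun t => (g t - g (τ * t)) / t) (Ioo 0 R) := by
  intro s hs t ht hst
  obtain ⟨hτs, hτs_lt⟩ := mul_mem_Ioo_of_mem_Ioo hτ hs
  obtain ⟨hτt, hτt_lt⟩ := mul_mem_Ioo_of_mem_Ioo hτ ht
  simp only [sub_comp_mul_div_eq_slope g hτ.2.ne hs.1.ne', sub_comp_mul_div_eq_slope g hτ.2.ne ht.1.ne']
  gcongr
  · linarith [hτ.2]
  · exact hg.slope_le_slope hτs hs hτt ht hτs_lt hτt_lt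
      (mul_le_mul_of_nonneg_left hst hτ.1.le) hst

lemma StrictMonoOn.sub_comp_mul_div_pos {R : ℝ} {g : ℝ → ℝ} (hg : StrictMonoOn g (Ioo 0 R))
    {τ t : ℝ} (hτ : τ ∈ Ioo (0 : ℝ) 1) (ht : t ∈ Ioo 0 R) :
    0 < (g t - g (τ * t)) / t := by
  obtain ⟨hτt, hτt_lt⟩ := mul_mem_Ioo_of_mem_Ioo hτ ht
  exact div_pos (sub_pos.mpr (hg hτt ht hτt_lt)) ht.1

lemma Ioo_zero_sSup_subset_Ioo {R : ℝ} (p : ℝ → Prop) :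
    Ioo 0 (sSup {x ∈ Ico 0 R | p x}) ⊆ Ioo 0 R := by
  intro t ⟨ht0, ht⟩
  have hne : {x ∈ Ico 0 R | p x}.Nonempty := by
    by_contra hempty
    rw [not_nonempty_iff_eq_empty.mp hempty, Real.sSup_empty] at ht
    exact ht0.not_gt ht
  obtain ⟨x, ⟨⟨-, hxR⟩, -⟩, htx⟩ := exists_lt_of_lt_csSup hne ht
  exact ⟨ht0, htx.trans hxR⟩

theorem statement_6_general
    (R : ℝ) (f' : ℝ → ℝ)
    (hmono : StrictMonoOn f' (Set.Ico (0:ℝ) R))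
    (hconv : ConvexOn ℝ (Set.Ico (0:ℝ) R) f')
    (ν : ℝ) (hν : ν = sSup {t ∈ Set.Ico (0:ℝ) R | f' t < 0}) :
    ∀ τ ∈ Set.Ioo (0:ℝ) 1,
      (∀ t ∈ Set.Ioo (0:ℝ) ν, 0 < (f' t - f' (τ * t)) / t) ∧
      MonotoneOn (fun t => (f' t - f' (τ * t)) / t) (Set.Ioo (0:ℝ) ν) := by
  intro τ hτ
  have hνR : Ioo 0 ν ⊆ Ioo 0 R := hν ▸ Ioo_zero_sSup_subset_Ioo _
  refine ⟨fun t ht => (hmono.mono Ioo_subset_Ico_self).sub_comp_mul_div_pos hτ (hνR ht), ?_⟩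
  exact ((hconv.subset Ioo_subset_Ico_self (convex_Ioo 0 R)).monotoneOn_sub_comp_mul_div
    hτ).mono hνR

/-- If additionally `f'` is convex on `[0,R)`, then for each fixed
`τ ∈ (0,1)` the map `t ↦ (f' t - f' (τ·t))/t` is positive and nondecreasing on
`(0,ν)`. -/
theorem statement_6
    (R : ℝ) (hR : 0 < R) (f f' : ℝ → ℝ)
    (hderiv : ∀ t ∈ Set.Ico (0:ℝ) R, HasDerivWithinAt f (f' t) (Set.Ico (0:ℝ) R) t)
    (hcont : ContinuousOn f' (Set.Ico (0:ℝ) R))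
    (h0 : f 0 = 0) (h0' : f' 0 = -1)
    (hmono : StrictMonoOn f' (Set.Ico (0:ℝ) R))
    (hconv : ConvexOn ℝ (Set.Ico (0:ℝ) R) f')
    (ν : ℝ) (hν : ν = sSup {t ∈ Set.Ico (0:ℝ) R | f' t < 0}) :
    ∀ τ ∈ Set.Ioo (0:ℝ) 1,
      (∀ t ∈ Set.Ioo (0:ℝ) ν, 0 < (f' t - f' (τ * t)) / t) ∧
      MonotoneOn (fun t => (f' t - f' (τ * t)) / t) (Set.Ioo (0:ℝ) ν) :=
  statement_6_general R f' hmono hconv ν hν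
end

section
/- Let R > 0 and let f : [0,R) → ℝ be continuously differentiable with f(0) = 0, f'(0) = −1, f' strictly increasing on [0,R), and f' convex on [0,R). Then the function t ↦ |n_f(t)|/t², where n_f(t) := t − f(t)/f'(t), is increasing (nondecreasing) on (0,ν), where ν := sup{t ∈ [0,R) : f'(t) < 0}. -/
/-!
On `(0, ν)` we have `f' < 0` and `f t ≤ t * f' t`, so `|n_f t| / t² = N t / (-f' t)` with
`N t = (t f'(t) - f(t)) / t² ≥ 0`. The denominator is positive and nonincreasing. Substituting
`s = t u` in `f t = ∫₀ᵗ f'` gives `N t = ∫₀¹ (f' t - f' (t u)) / t du = ∫₀¹ (1 - u) · slope f' (t u) t du`,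
and the integrand is nondecreasing in `t` because the secant slopes of the convex function `f'`
increase with both endpoints.
-/

open Set intervalIntegral

theorem ConvexOn.slope_le_slope_of_le {𝕜 : Type*} [Field 𝕜] [LinearOrder 𝕜]
    [IsStrictOrderedRing 𝕜] {s : Set 𝕜} {g : 𝕜 → 𝕜} (hg : ConvexOn 𝕜 s g) {x₁ x₂ y₁ y₂ : 𝕜}
    (hx₁ : x₁ ∈ s) (hx₂ : x₂ ∈ s) (hy₁ : y₁ ∈ s) (hy₂ : y₂ ∈ s) (hx : x₁ < x₂) (hy : y₁ < y₂)
    (h₁ : x₁ ≤ y₁) (h₂ : x₂ ≤ y₂) :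
    slope g x₁ x₂ ≤ slope g y₁ y₂ := calc
  slope g x₁ x₂ ≤ slope g x₁ y₂ :=
    hg.monotoneOn_slope_gt hx₁ ⟨hx₂, hx⟩ ⟨hy₂, hx.trans_le h₂⟩ h₂
  _ = slope g y₂ x₁ := slope_comm _ _ _
  _ ≤ slope g y₂ y₁ := hg.monotoneOn_slope_lt hy₂ ⟨hx₁, h₁.trans_lt hy⟩ ⟨hy₁, hy⟩ h₁
  _ = slope g y₁ y₂ := slope_comm _ _ _

theorem ConvexOn.sub_comp_mul_div_le_of_le {𝕜 : Type*} [Field 𝕜] [LinearOrder 𝕜]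
    [IsStrictOrderedRing 𝕜] {s : Set 𝕜} {g : 𝕜 → 𝕜} (hg : ConvexOn 𝕜 s g) {u a b : 𝕜}
    (hu₀ : 0 ≤ u) (hu₁ : u ≤ 1) (ha : 0 < a) (hab : a ≤ b) (hs : Icc 0 b ⊆ s) :
    (g a - g (a * u)) / a ≤ (g b - g (b * u)) / b := by
  rcases hu₁.eq_or_lt with rfl | hu₁
  · simp
  have hb : 0 < b := ha.trans_le hab
  have mem : ∀ {t}, 0 < t → t ≤ b → t * u ∈ s ∧ t ∈ s := fun ht htb =>
    ⟨hs ⟨by positivity, by nlinarith⟩, hs ⟨ht.le, htb⟩⟩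
  have lt : ∀ {t}, 0 < t → t * u < t := fun ht => mul_lt_of_lt_one_right ht hu₁
  have eq_slope : ∀ {t}, 0 < t → (g t - g (t * u)) / t = (1 - u) * slope g (t * u) t := by
    intro t ht
    have : t - t * u ≠ 0 := sub_ne_zero.2 (lt ht).ne'
    rw [slope_def_field]
    field_simp
  rw [eq_slope ha, eq_slope hb]
  exact mul_le_mul_of_nonneg_left
    (hg.slope_le_slope_of_le (mem ha hab).1 (mem ha hab).2 (mem hb le_rfl).1 (mem hb le_rfl).2
      (lt ha) (lt hb) (mul_le_mul_of_nonneg_right hab hu₀) hab)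
    (sub_nonneg.2 hu₁.le)

section Majorant

variable {R : ℝ} {f f' : ℝ → ℝ}

theorem mul_mem_Ico_of_mem_Icc {t u : ℝ} (ht : t ∈ Ico 0 R) (hu : u ∈ Icc 0 1) :
    t * u ∈ Ico 0 R :=
  ⟨mul_nonneg ht.1 hu.1, (mul_le_of_le_one_right ht.1 hu.2).trans_lt ht.2⟩

theorem continuousOn_comp_mul (hcont : ContinuousOn f' (Ico 0 R)) {t : ℝ} (ht : t ∈ Ico 0 R) :
    ContinuousOn (fun u => f' (t * u)) (Icc 0 1) :=
  hcont.comp (continuous_const_mul t).continuousOn fun _ hu => mul_mem_Ico_of_mem_Icc ht hu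

theorem eq_mul_integral_comp_mul
    (hderiv : ∀ t ∈ Ico (0:ℝ) R, HasDerivWithinAt f (f' t) (Ico (0:ℝ) R) t)
    (hcont : ContinuousOn f' (Ico 0 R)) (h0 : f 0 = 0) {t : ℝ} (ht : t ∈ Ioo 0 R) :
    f t = t * ∫ u in (0:ℝ)..1, f' (t * u) := by
  have hsub : Icc 0 t ⊆ Ico 0 R := Icc_subset_Ico_right ht.2
  have hftc : ∫ s in (0:ℝ)..t, f' s = f t - f 0 :=
    integral_eq_sub_of_hasDeriv_right_of_le ht.1.le
      (fun s hs => ((hderiv s (hsub hs)).continuousWithinAt).mono hsub)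
      (fun s hs => ((hderiv s (hsub (Ioo_subset_Icc_self hs))).hasDerivAt
        (Ico_mem_nhds hs.1 (hs.2.trans ht.2))).hasDerivWithinAt)
      ((hcont.mono hsub).intervalIntegrable_of_Icc ht.1.le)
  rw [integral_comp_mul_left _ ht.1.ne', mul_zero, mul_one, smul_eq_mul, hftc, h0, sub_zero,
    mul_inv_cancel_left₀ ht.1.ne']

theorem le_mul_of_monotoneOn
    (hderiv : ∀ t ∈ Ico (0:ℝ) R, HasDerivWithinAt f (f' t) (Ico (0:ℝ) R) t)
    (hcont : ContinuousOn f' (Ico 0 R)) (h0 : f 0 = 0) (hmono : MonotoneOn f' (Ico 0 R))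
    {t : ℝ} (ht : t ∈ Ioo 0 R) :
    f t ≤ t * f' t := by
  have htR : t ∈ Ico 0 R := Ioo_subset_Ico_self ht
  rw [eq_mul_integral_comp_mul hderiv hcont h0 ht]
  refine mul_le_mul_of_nonneg_left ?_ ht.1.le
  calc ∫ u in (0:ℝ)..1, f' (t * u)
      ≤ ∫ _ in (0:ℝ)..1, f' t :=
        integral_mono_on zero_le_one
          ((continuousOn_comp_mul hcont htR).intervalIntegrable_of_Icc zero_le_one)
          intervalIntegrable_const
          fun u hu => hmono (mul_mem_Ico_of_mem_Icc htR hu) htR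
            (mul_le_of_le_one_right ht.1.le hu.2)
    _ = f' t := by simp

theorem sub_div_sq_eq_integral
    (hderiv : ∀ t ∈ Ico (0:ℝ) R, HasDerivWithinAt f (f' t) (Ico (0:ℝ) R) t)
    (hcont : ContinuousOn f' (Ico 0 R)) (h0 : f 0 = 0) {t : ℝ} (ht : t ∈ Ioo 0 R) :
    (t * f' t - f t) / t ^ 2 = ∫ u in (0:ℝ)..1, (f' t - f' (t * u)) / t := by
  have hne : t ≠ 0 := ht.1.ne'
  rw [intervalIntegral.integral_div, integral_sub intervalIntegrable_const
    ((continuousOn_comp_mul hcont (Ioo_subset_Ico_self ht)).intervalIntegrable_of_Icc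
      zero_le_one), integral_const, eq_mul_integral_comp_mul hderiv hcont h0 ht]
  field_simp
  ring

theorem monotoneOn_sub_div_sq
    (hderiv : ∀ t ∈ Ico (0:ℝ) R, HasDerivWithinAt f (f' t) (Ico (0:ℝ) R) t)
    (hcont : ContinuousOn f' (Ico 0 R)) (h0 : f 0 = 0) (hconv : ConvexOn ℝ (Ico 0 R) f') :
    MonotoneOn (fun t => (t * f' t - f t) / t ^ 2) (Ioo 0 R) := by
  have hint : ∀ t ∈ Ioo 0 R,
      IntervalIntegrable (fun u => (f' t - f' (t * u)) / t) MeasureTheory.volume 0 1 :=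
    fun t ht => ((continuousOn_const.sub (continuousOn_comp_mul hcont
      (Ioo_subset_Ico_self ht))).div_const t).intervalIntegrable_of_Icc zero_le_one
  intro a ha b hb hab
  simp only [sub_div_sq_eq_integral hderiv hcont h0 ha, sub_div_sq_eq_integral hderiv hcont h0 hb]
  exact integral_mono_on zero_le_one (hint a ha) (hint b hb) fun u hu =>
    hconv.sub_comp_mul_div_le_of_le hu.1 hu.2 ha.1 hab (Icc_subset_Ico_right hb.2)

end Majorant

theorem mem_Ico_and_neg_of_lt_sSup {R : ℝ} {g : ℝ → ℝ} (hg : MonotoneOn g (Ico 0 R)) {t : ℝ}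
    (ht : t ∈ Ioo 0 (sSup {s ∈ Ico (0:ℝ) R | g s < 0})) :
    t ∈ Ico 0 R ∧ g t < 0 := by
  have hne : {s ∈ Ico (0:ℝ) R | g s < 0}.Nonempty := by
    by_contra hempty
    rw [not_nonempty_iff_eq_empty.1 hempty, Real.sSup_empty] at ht
    exact lt_asymm ht.1 ht.2
  obtain ⟨s, ⟨hsR, hgs⟩, hts⟩ := exists_lt_of_lt_csSup hne ht.2
  have htR : t ∈ Ico 0 R := ⟨ht.1.le, hts.trans hsR.2⟩
  exact ⟨htR, (hg htR hsR hts.le).trans_lt hgs⟩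

theorem abs_sub_div_div_sq {x y z : ℝ} (hy : y < 0) (hz : z ≤ x * y) :
    |x - z / y| / x ^ 2 = (x * y - z) / x ^ 2 / -y := by
  rw [show x - z / y = (x * y - z) / y by field_simp [hy.ne], abs_div,
    abs_of_nonneg (sub_nonneg.2 hz), abs_of_neg hy, div_div, div_div, mul_comm (-y)]

theorem statement_7_general
    (R : ℝ) (f f' : ℝ → ℝ)
    (hderiv : ∀ t ∈ Set.Ico (0:ℝ) R, HasDerivWithinAt f (f' t) (Set.Ico (0:ℝ) R) t)
    (hcont : ContinuousOn f' (Set.Ico (0:ℝ) R))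
    (h0 : f 0 = 0)
    (hmono : StrictMonoOn f' (Set.Ico (0:ℝ) R))
    (hconv : ConvexOn ℝ (Set.Ico (0:ℝ) R) f')
    (ν : ℝ) (hν : ν = sSup {t ∈ Set.Ico (0:ℝ) R | f' t < 0}) :
    MonotoneOn (fun t => |t - f t / f' t| / t ^ 2) (Set.Ioo (0:ℝ) ν) := by
  subst hν
  have hmono := hmono.monotoneOn
  have hN := monotoneOn_sub_div_sq hderiv hcont h0 hconv
  intro a ha b hb hab
  obtain ⟨haR, hfa⟩ := mem_Ico_and_neg_of_lt_sSup hmono ha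
  obtain ⟨hbR, hfb⟩ := mem_Ico_and_neg_of_lt_sSup hmono hb
  have ha' : a ∈ Ioo 0 R := ⟨ha.1, haR.2⟩
  have hb' : b ∈ Ioo 0 R := ⟨hb.1, hbR.2⟩
  have hfa_le := le_mul_of_monotoneOn hderiv hcont h0 hmono ha'
  have hfb_le := le_mul_of_monotoneOn hderiv hcont h0 hmono hb'
  simp only [abs_sub_div_div_sq hfa hfa_le, abs_sub_div_div_sq hfb hfb_le]
  exact div_le_div₀ (div_nonneg (sub_nonneg.2 hfb_le) (sq_nonneg b)) (hN ha' hb' hab)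
    (neg_pos.2 hfb) (neg_le_neg (hmono haR hbR hab))

/-- If additionally `f'` is convex on `[0,R)`, then
`t ↦ |n_f t| / t²` is nondecreasing on `(0,ν)`. -/
theorem statement_7
    (R : ℝ) (hR : 0 < R) (f f' : ℝ → ℝ)
    (hderiv : ∀ t ∈ Set.Ico (0:ℝ) R, HasDerivWithinAt f (f' t) (Set.Ico (0:ℝ) R) t)
    (hcont : ContinuousOn f' (Set.Ico (0:ℝ) R))
    (h0 : f 0 = 0) (h0' : f' 0 = -1)
    (hmono : StrictMonoOn f' (Set.Ico (0:ℝ) R))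
    (hconv : ConvexOn ℝ (Set.Ico (0:ℝ) R) f')
    (ν : ℝ) (hν : ν = sSup {t ∈ Set.Ico (0:ℝ) R | f' t < 0}) :
    MonotoneOn (fun t => |t - f t / f' t| / t ^ 2) (Set.Ioo (0:ℝ) ν) :=
  statement_7_general R f f' hderiv hcont h0 hmono hconv ν hν
end

section
/- Let L > 0, 0 < μ ≤ 1, K ≥ 1 and 0 ≤ ϑ < 1/K. Then for every t ∈ (0, (1/L)^{1/μ}), the inequality (1+ϑ)·μ·L·t^μ/((μ+1)·(1 − L·t^μ)) + ϑ < 1/K holds if and only if t < [ (μ+1) / ( L·( μ·(1+K)/(1−K·ϑ) + 1 ) ) ]^{1/μ}; moreover [ (μ+1) / ( L·( μ·(1+K)/(1−K·ϑ) + 1 ) ) ]^{1/μ} ≤ (1/L)^{1/μ}. -/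
/-!
With `x = L·t^μ ∈ (0, 1)` and `c = 1 - Kϑ > 0`, clearing the positive denominators turns the
inequality into the linear condition `x·(μ(1+K) + c) < (μ+1)·c` on `x`, that is
`x < (μ+1) / (μ(1+K)/c + 1)`. Since `t ↦ L·t^μ` is strictly increasing, this is a bound on `t`,
and the bound on `x` is at most `1` because `c ≤ 1 + K`.
-/

open Real

lemma mul_rpow_lt_iff_lt_rpow_inv {L μ t a : ℝ} (hL : 0 < L) (hμ : 0 < μ) (ht : 0 ≤ t)
    (ha : 0 ≤ a) : L * t ^ μ < a ↔ t < (a / L) ^ (1 / μ) := by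
  rw [← lt_div_iff₀' hL, one_div, lt_rpow_inv_iff_of_pos ht (div_nonneg ha hL.le) hμ]

lemma div_mul_one_sub_add_lt_inv_iff {μ K ϑ x : ℝ} (hμ : 0 ≤ μ) (hK : 0 < K)
    (hKϑ : 0 < 1 - K * ϑ) (hx : x < 1) :
    (1 + ϑ) * μ * x / ((μ + 1) * (1 - x)) + ϑ < 1 / K ↔
      x < (μ + 1) / (μ * (1 + K) / (1 - K * ϑ) + 1) := by
  have hden : 0 < (μ + 1) * (1 - x) := by nlinarith
  rw [div_add' _ _ _ hden.ne', div_lt_div_iff₀ hden hK, lt_div_iff₀ (by positivity),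
    div_add_one hKϑ.ne', mul_div_assoc', div_lt_iff₀ hKϑ]
  constructor <;> intro h <;> linarith

lemma div_div_one_sub_add_one_le_one {μ K ϑ : ℝ} (hμ : 0 ≤ μ) (hK : 0 < K)
    (hKϑ : 0 < 1 - K * ϑ) (hϑ : -1 ≤ ϑ) :
    (μ + 1) / (μ * (1 + K) / (1 - K * ϑ) + 1) ≤ 1 := by
  have hc : 1 - K * ϑ ≤ 1 + K := by nlinarith
  rw [div_le_one (by positivity), add_le_add_iff_right]
  calc μ = μ * (1 - K * ϑ) / (1 - K * ϑ) := (mul_div_cancel_right₀ μ hKϑ.ne').symm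
    _ ≤ μ * (1 + K) / (1 - K * ϑ) := by gcongr

theorem statement_14_general
    (L μ K ϑ : ℝ) (hL : 0 < L) (hμ0 : 0 < μ)
    (hK : 1 ≤ K) (hϑ0 : 0 ≤ ϑ) (hϑ : ϑ < 1 / K) :
    (∀ t ∈ Set.Ioo (0:ℝ) ((1 / L) ^ (1 / μ)),
      ((1 + ϑ) * μ * L * t ^ μ / ((μ + 1) * (1 - L * t ^ μ)) + ϑ < 1 / K ↔
        t < ((μ + 1) / (L * (μ * (1 + K) / (1 - K * ϑ) + 1))) ^ (1 / μ))) ∧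
    ((μ + 1) / (L * (μ * (1 + K) / (1 - K * ϑ) + 1))) ^ (1 / μ)
      ≤ (1 / L) ^ (1 / μ) := by
  have hK0 : 0 < K := by linarith
  have hKϑ : 0 < 1 - K * ϑ := by
    have := (lt_div_iff₀ hK0).mp hϑ
    linarith
  set s := (μ + 1) / (μ * (1 + K) / (1 - K * ϑ) + 1)
  have hs : 0 ≤ s := by positivity
  have hsL : (μ + 1) / (L * (μ * (1 + K) / (1 - K * ϑ) + 1)) = s / L := by
    rw [div_div, mul_comm]
  rw [hsL]
  refine ⟨fun t ⟨ht0, ht⟩ => ?_, ?_⟩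
  · have hx : L * t ^ μ < 1 := (mul_rpow_lt_iff_lt_rpow_inv hL hμ0 ht0.le one_pos.le).mpr ht
    rw [mul_assoc _ L, div_mul_one_sub_add_lt_inv_iff hμ0.le hK0 hKϑ hx,
      mul_rpow_lt_iff_lt_rpow_inv hL hμ0 ht0.le hs]
  · have hs1 : s ≤ 1 := div_div_one_sub_add_one_le_one hμ0.le hK0 hKϑ (by linarith)
    gcongr

/-- For the Hölder majorant function and constants `K ≥ 1`,
`0 ≤ ϑ < 1/K`, for every `t ∈ (0, (1/L)^(1/μ))` the inequality
`(1+ϑ)·μ·L·t^μ/((μ+1)·(1 - L·t^μ)) + ϑ < 1/K` holds iff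
`t < [(μ+1) / (L·(μ·(1+K)/(1-K·ϑ) + 1))]^(1/μ)`; moreover this bound is
`≤ (1/L)^(1/μ)`. -/
theorem statement_14
    (L μ K ϑ : ℝ) (hL : 0 < L) (hμ0 : 0 < μ) (hμ1 : μ ≤ 1)
    (hK : 1 ≤ K) (hϑ0 : 0 ≤ ϑ) (hϑ : ϑ < 1 / K) :
    (∀ t ∈ Set.Ioo (0:ℝ) ((1 / L) ^ (1 / μ)),
      ((1 + ϑ) * μ * L * t ^ μ / ((μ + 1) * (1 - L * t ^ μ)) + ϑ < 1 / K ↔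
        t < ((μ + 1) / (L * (μ * (1 + K) / (1 - K * ϑ) + 1))) ^ (1 / μ))) ∧
    ((μ + 1) / (L * (μ * (1 + K) / (1 - K * ϑ) + 1))) ^ (1 / μ)
      ≤ (1 / L) ^ (1 / μ) :=
  statement_14_general L μ K ϑ hL hμ0 hK hϑ0 hϑ
end

section
/- Let γ > 0, K ≥ 1 and 0 ≤ ϑ < 1/K. Then for every t ∈ (0, (√2 − 1)/(√2·γ)), the inequality (1+ϑ)·γ·t/(2·(1 − γ·t)² − 1) + ϑ < 1/K holds if and only if t < [ K·(1 − 3ϑ) + 4 − √( K²·(ϑ² − 6ϑ + 1) + 8·K·(1 − ϑ) + 8 ) ] / ( 4·γ·(1 − K·ϑ) ); moreover this bound is ≤ (√2 − 1)/(√2·γ). -/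
/-!
With `u = γ t`, `c = 1 - Kϑ` and `b = K(1 - 3ϑ) + 4`, clearing the positive denominators turns
the inequality into `0 < 2c u² - b u + c`, a quadratic with discriminant
`K²(ϑ² - 6ϑ + 1) + 8K(1 - ϑ) + 8` whose larger root exceeds `1`. On `u < 1` it is therefore
positive exactly below its smaller root. At `u = 1 - 1/√2` the denominator `2(1 - u)² - 1`
vanishes, so the quadratic equals `-K(1 + ϑ)u ≤ 0` there, which places the smaller root below
`1 - 1/√2`.
-/

open Real

theorem quadratic_pos_iff_lt_smaller_root {a b c x : ℝ} (ha : 0 < a)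
    (hd : 0 ≤ b ^ 2 - 4 * a * c) (hx : 2 * a * x < b) :
    0 < a * x ^ 2 - b * x + c ↔ x < (b - √(b ^ 2 - 4 * a * c)) / (2 * a) := by
  set s := √(b ^ 2 - 4 * a * c)
  have hs : 0 ≤ s := sqrt_nonneg _
  have hfactor :
      4 * a * (a * x ^ 2 - b * x + c) = (2 * a * x - (b - s)) * (2 * a * x - (b + s)) := by
    linear_combination sq_sqrt hd
  have hlarger : 2 * a * x - (b + s) < 0 := by linarith
  rw [lt_div_iff₀ (by positivity), mul_comm x,
    ← mul_pos_iff_of_pos_left (by positivity : 0 < 4 * a), hfactor, ← neg_mul_neg,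
    mul_pos_iff_of_pos_right (neg_pos.mpr hlarger), neg_pos, sub_neg]

theorem div_add_lt_one_div_iff {x y K ϑ : ℝ} (hy : 0 < y) (hK : 0 < K) :
    x / y + ϑ < 1 / K ↔ K * x < (1 - K * ϑ) * y := by
  rw [← lt_sub_iff_add_lt, div_lt_iff₀ hy, ← mul_lt_mul_iff_right₀ hK,
    ← mul_assoc, mul_sub, mul_one_div_cancel hK.ne']

theorem sqrt_two_sub_one_div_sqrt_two_eq : (√2 - 1) / √2 = 1 - 1 / √2 := by
  field_simp

theorem sqrt_two_sub_one_div_sqrt_two_lt_one : (√2 - 1) / √2 < 1 := by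
  rw [sqrt_two_sub_one_div_sqrt_two_eq]; simp

theorem two_mul_one_sub_sq_sub_one_pos {u : ℝ} (hu : u < (√2 - 1) / √2) :
    0 < 2 * (1 - u) ^ 2 - 1 := by
  have hinv : 1 / √2 < 1 - u := by rw [sqrt_two_sub_one_div_sqrt_two_eq] at hu; linarith
  have hsq : 1 / 2 < (1 - u) ^ 2 := by
    calc (1 : ℝ) / 2 = (1 / √2) ^ 2 := by rw [div_pow, sq_sqrt zero_le_two, one_pow]
      _ < (1 - u) ^ 2 := by gcongr
  linarith

theorem two_mul_one_sub_sq_sub_one_eq_zero : 2 * (1 - (√2 - 1) / √2) ^ 2 - 1 = 0 := by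
  rw [sqrt_two_sub_one_div_sqrt_two_eq, sub_sub_cancel, div_pow, sq_sqrt zero_le_two]
  norm_num

noncomputable def smaleQuadratic (K ϑ u : ℝ) : ℝ :=
  2 * (1 - K * ϑ) * u ^ 2 - (K * (1 - 3 * ϑ) + 4) * u + (1 - K * ϑ)

/-- The smaller root of `smaleQuadratic K ϑ`. -/
noncomputable def smaleThreshold (K ϑ : ℝ) : ℝ :=
  (K * (1 - 3 * ϑ) + 4 - √(K ^ 2 * (ϑ ^ 2 - 6 * ϑ + 1) + 8 * K * (1 - ϑ) + 8)) /
    (4 * (1 - K * ϑ))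

theorem smaleQuadratic_eq (K ϑ u : ℝ) :
    smaleQuadratic K ϑ u = (1 - K * ϑ) * (2 * (1 - u) ^ 2 - 1) - K * ((1 + ϑ) * u) := by
  unfold smaleQuadratic; ring

section Threshold

variable {K ϑ : ℝ} (hK : 0 < K) (hϑ : 0 ≤ ϑ) (hKϑ : K * ϑ < 1)
include hK hϑ hKϑ

theorem smaleQuadratic_pos_iff_lt_smaleThreshold {u : ℝ} (hu : u < 1) :
    0 < smaleQuadratic K ϑ u ↔ u < smaleThreshold K ϑ := by
  have hc : 0 < 1 - K * ϑ := by linarith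
  have hb : 4 * (1 - K * ϑ) < K * (1 - 3 * ϑ) + 4 := by nlinarith
  have hdisc : K ^ 2 * (ϑ ^ 2 - 6 * ϑ + 1) + 8 * K * (1 - ϑ) + 8 =
      (K * (1 - 3 * ϑ) + 4) ^ 2 - 4 * (2 * (1 - K * ϑ)) * (1 - K * ϑ) := by ring
  rw [smaleQuadratic, smaleThreshold, hdisc, show 4 * (1 - K * ϑ) = 2 * (2 * (1 - K * ϑ)) by ring]
  exact quadratic_pos_iff_lt_smaller_root (by positivity) (by nlinarith) (by nlinarith)

theorem newton_ratio_lt_iff_lt_smaleThreshold {u : ℝ} (hu : u < (√2 - 1) / √2) :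
    (1 + ϑ) * u / (2 * (1 - u) ^ 2 - 1) + ϑ < 1 / K ↔ u < smaleThreshold K ϑ := by
  have hu1 : u < 1 := hu.trans sqrt_two_sub_one_div_sqrt_two_lt_one
  rw [div_add_lt_one_div_iff (two_mul_one_sub_sq_sub_one_pos hu) hK, ← sub_pos,
    ← smaleQuadratic_eq, smaleQuadratic_pos_iff_lt_smaleThreshold hK hϑ hKϑ hu1]

theorem smaleThreshold_le : smaleThreshold K ϑ ≤ (√2 - 1) / √2 := by
  rw [← not_lt, ← smaleQuadratic_pos_iff_lt_smaleThreshold hK hϑ hKϑ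
      sqrt_two_sub_one_div_sqrt_two_lt_one, not_lt,
    smaleQuadratic_eq, two_mul_one_sub_sq_sub_one_eq_zero, mul_zero, zero_sub, neg_nonpos]
  have hu0 : 0 ≤ (√2 - 1) / √2 :=
    div_nonneg (sub_nonneg.mpr one_lt_sqrt_two.le) (sqrt_nonneg 2)
  positivity

end Threshold

/-- For the Smale majorant function and constants `K ≥ 1`,
`0 ≤ ϑ < 1/K`, for every `t ∈ (0, (√2 - 1)/(√2·γ))` the inequality
`(1+ϑ)·γ·t/(2·(1-γ·t)² - 1) + ϑ < 1/K` holds iff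
`t < [K·(1-3ϑ) + 4 - √(K²·(ϑ² - 6ϑ + 1) + 8K·(1-ϑ) + 8)] / (4γ·(1-K·ϑ))`;
moreover this bound is `≤ (√2 - 1)/(√2·γ)`. -/
theorem statement_19
    (γ K ϑ : ℝ) (hγ : 0 < γ) (hK : 1 ≤ K) (hϑ0 : 0 ≤ ϑ) (hϑ : ϑ < 1 / K) :
    (∀ t ∈ Set.Ioo (0:ℝ) ((Real.sqrt 2 - 1) / (Real.sqrt 2 * γ)),
      ((1 + ϑ) * γ * t / (2 * (1 - γ * t) ^ 2 - 1) + ϑ < 1 / K ↔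
        t < (K * (1 - 3 * ϑ) + 4 -
            Real.sqrt (K ^ 2 * (ϑ ^ 2 - 6 * ϑ + 1) + 8 * K * (1 - ϑ) + 8)) /
          (4 * γ * (1 - K * ϑ)))) ∧
    (K * (1 - 3 * ϑ) + 4 -
        Real.sqrt (K ^ 2 * (ϑ ^ 2 - 6 * ϑ + 1) + 8 * K * (1 - ϑ) + 8)) /
      (4 * γ * (1 - K * ϑ)) ≤ (Real.sqrt 2 - 1) / (Real.sqrt 2 * γ) := by
  have hK0 : 0 < K := by linarith
  have hKϑ : K * ϑ < 1 := by rwa [lt_div_iff₀ hK0, mul_comm] at hϑ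
  have hscale (x : ℝ) : x / (4 * γ * (1 - K * ϑ)) = x / (4 * (1 - K * ϑ)) / γ := by
    rw [div_div]; ring_nf
  have hbound : (√2 - 1) / (√2 * γ) = (√2 - 1) / √2 / γ := (div_div _ _ _).symm
  rw [hscale, hbound]
  refine ⟨fun t ht => ?_, ?_⟩
  · have hγt : γ * t < (√2 - 1) / √2 := by rw [← lt_div_iff₀' hγ]; exact ht.2
    rw [lt_div_iff₀' hγ, mul_assoc]
    exact newton_ratio_lt_iff_lt_smaleThreshold hK0 hϑ0 hKϑ hγt
  · exact div_le_div_of_nonneg_right (smaleThreshold_le hK0 hϑ0 hKϑ) hγ.le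
end
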